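/- Let B be a left semi-brace such that E is an ideal of B. Then Zoc(B) = {a ∈ B : ρ_a = ρ_0 and λ_a = λ_{e_a}}. -/
import Mathlib


/-- A left semi-brace: `(B,+)` is a left cancellative semigroup, `(B,*)` is a group
(whose identity `1` plays the role of `0` in the additive notation of the paper, and
`a⁻¹` plays the role of `a⁻`), and `a ∘ (b + c) = a ∘ b + a ∘ (a⁻ + c)` holds. -/
class LeftSemiBrace (B : Type*) extends Group B, Add B where
  add_assoc : ∀ a b c : B, a + b + c = a + (b + c)
  add_left_cancel : ∀ a b c : B, a + b = a + c → b = c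
  circ_add : ∀ a b c : B, a * (b + c) = a * b + a * (a⁻¹ + c)

namespace LeftSemiBrace

variable {B : Type*} [LeftSemiBrace B]

/-- The set `E` of additive idempotents. -/
def E (B : Type*) [LeftSemiBrace B] : Set B := {e | e + e = e}

/-- The set `G = B + 0`. -/
def G (B : Type*) [LeftSemiBrace B] : Set B := {x | ∃ b : B, x = b + 1}

/-- `λ_a (b) = a ∘ (a⁻ + b)`. -/
def lam (a b : B) : B := a * (a⁻¹ + b)

/-- `ρ_b (a) = (a⁻ + b)⁻ ∘ b`. -/
def rho (b a : B) : B := (a⁻¹ + b)⁻¹ * b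

/-- `a · b = λ_a(a⁻) + a ∘ b + λ_b(b⁻)`. -/
def dot (a b : B) : B := lam a a⁻¹ + a * b + lam b b⁻¹

/-- The group part `g_b = b + 0` of an element `b`. -/
def gp (b : B) : B := b + 1

/-- The additive inverse (within the group `(G,+)`) of the group part of an element:
for `g ∈ G` one has `neg g = -g`, since `-g_a = λ_a(a⁻) = a ∘ (a⁻ + a⁻)`. -/
def neg (a : B) : B := a * (a⁻¹ + a⁻¹)

/-- The idempotent part `e_b = -g_b + b` of an element `b`. -/
def ep (b : B) : B := neg (gp b) + b

/-- `S` is a subsemigroup of `(B,+)`. -/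
def IsAddSubsemigroup (S : Set B) : Prop := ∀ x ∈ S, ∀ y ∈ S, x + y ∈ S

/-- `S` is a subgroup of the multiplicative group `(B,∘)`. -/
def IsCircSubgroup (S : Set B) : Prop :=
  (1 : B) ∈ S ∧ (∀ x ∈ S, ∀ y ∈ S, x * y ∈ S) ∧ ∀ x ∈ S, x⁻¹ ∈ S

/-- `S` is a normal subgroup of the multiplicative group `(B,∘)`. -/
def IsCircNormal (S : Set B) : Prop :=
  IsCircSubgroup S ∧ ∀ x ∈ S, ∀ b : B, b * x * b⁻¹ ∈ S

/-- `S` is a subgroup of the group `(G,+)`. -/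
def IsAddSubgroupOfG (S : Set B) : Prop :=
  S ⊆ G B ∧ (1 : B) ∈ S ∧ (∀ x ∈ S, ∀ y ∈ S, x + y ∈ S) ∧ ∀ x ∈ S, neg x ∈ S

/-- `S` is a normal subgroup of the group `(G,+)`. -/
def IsAddNormalSubgroupOfG (S : Set B) : Prop :=
  IsAddSubgroupOfG S ∧ ∀ g ∈ G B, ∀ x ∈ S, g + x + neg g ∈ S

/-- `I` is an ideal of the left semi-brace `B` (Definition 17 of Catino–Colazzo–Stefanelli):
`I` is a subsemigroup of `(B,+)`, a normal subgroup of `(B,∘)`, `I ∩ G` is a normal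
subgroup of `(G,+)`, `ρ_b(n) ∈ I` for all `b ∈ B`, `n ∈ I ∩ G`, and `λ_g(e) ∈ I` for all
`g ∈ G`, `e ∈ I ∩ E`. -/
def IsIdeal (I : Set B) : Prop :=
  IsAddSubsemigroup I ∧ IsCircNormal I ∧ IsAddNormalSubgroupOfG (I ∩ G B) ∧
    (∀ b : B, ∀ n ∈ I ∩ G B, rho b n ∈ I) ∧
    (∀ g ∈ G B, ∀ e ∈ I ∩ E B, lam g e ∈ I)

/-- `I` is a left ideal of the left semi-brace `B`. -/
def IsLeftIdeal (I : Set B) : Prop :=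
  (∀ x ∈ I, x + 1 ∈ I) ∧ IsAddSubgroupOfG (I ∩ G B) ∧
    (∀ g ∈ G B, ∀ x ∈ I, lam g x ∈ I) ∧ IsCircSubgroup I

/-- The subgroup of `(G,+)` generated by a subset `S` of `G`. -/
def addClosure (S : Set B) : Set B :=
  ⋂₀ {T : Set B | S ⊆ T ∧ (1 : B) ∈ T ∧ (∀ x ∈ T, ∀ y ∈ T, x + y ∈ T) ∧ ∀ x ∈ T, neg x ∈ T}

/-- `X · Y`: the subgroup of `(G,+)` generated by `{x · y : x ∈ X, y ∈ Y}`. -/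
def dotSet (X Y : Set B) : Set B := addClosure {z | ∃ x ∈ X, ∃ y ∈ Y, z = dot x y}

/-- `S + E = {s + e : s ∈ S, e ∈ E}`. -/
def addE (S : Set B) : Set B := {z | ∃ s ∈ S, ∃ e ∈ E B, z = s + e}

/-- The right series of `B`: `rightSeries B n = B^(n+1)`, where `B^(1) = B` and
`B^(n+1) = B^(n) · B + E`. -/
def rightSeries (B : Type*) [LeftSemiBrace B] : ℕ → Set B
  | 0 => Set.univ
  | n + 1 => addE (dotSet (rightSeries B n) Set.univ)

/-- The left series of `B`: `leftSeries B n = B^(n+1)`, where `B^1 = B` and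
`B^(n+1) = B · B^n + E`. -/
def leftSeries (B : Type*) [LeftSemiBrace B] : ℕ → Set B
  | 0 => Set.univ
  | n + 1 => addE (dotSet Set.univ (leftSeries B n))

/-- The right series of the skew left brace `G`: `rightSeriesG B n = G^(n+1)`, where
`G^(1) = G` and `G^(n+1) = G^(n) · G`. -/
def rightSeriesG (B : Type*) [LeftSemiBrace B] : ℕ → Set B
  | 0 => G B
  | n + 1 => dotSet (rightSeriesG B n) (G B)

/-- The series `bracketSeries B n = B^[n+1]`, where `B^[1] = B` and `B^[n+1] = H_n + E`
with `H_n` the subgroup of `(G,+)` generated by `⋃_{i=1}^{n} B^[i] · B^[n+1-i]`. -/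
def bracketSeries (B : Type*) [LeftSemiBrace B] : ℕ → Set B
  | 0 => Set.univ
  | n + 1 =>
      addE (addClosure (⋃ i : Fin (n + 1),
        dotSet (bracketSeries B i.1) (bracketSeries B (n - i.1))))
  decreasing_by
  · exact i.isLt
  · exact Nat.lt_succ_of_le (Nat.sub_le n i.1)

/-- The socle `Soc(B) = {a ∈ B : ρ_a = ρ_0, λ_a = λ_0}`. -/
def Soc (B : Type*) [LeftSemiBrace B] : Set B :=
  {a | rho a = rho (1 : B) ∧ lam a = lam (1 : B)}

/-- The generalized socle `Zoc(B) = Soc(B) + E`. -/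
def Zoc (B : Type*) [LeftSemiBrace B] : Set B :=
  {z | ∃ a ∈ Soc B, ∃ e ∈ E B, z = a + e}

/-- The lower central series of the group `(G,+)`:  `γ_1 = G` and `γ_{n+1}` is the
subgroup of `(G,+)` generated by the additive commutators `-x - y + x + y` with
`x ∈ γ_n`, `y ∈ G`. -/
def lowerCentralSeriesG (B : Type*) [LeftSemiBrace B] : ℕ → Set B
  | 0 => G B
  | n + 1 => addClosure
      {z | ∃ x ∈ lowerCentralSeriesG B n, ∃ y ∈ G B, z = neg x + neg y + x + y}

/-- The group `(G,+)` is nilpotent. -/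
def IsNilpotentGAdd (B : Type*) [LeftSemiBrace B] : Prop :=
  ∃ n : ℕ, lowerCentralSeriesG B n = {(1 : B)}

/-! ### Auxiliary lemmas -/

private lemma one_add' (b : B) : (1 : B) + b = b := by
  have h := circ_add (1 : B) b b
  simp only [one_mul, inv_one] at h
  exact (add_left_cancel b b (1 + b) h).symm

private lemma lam_one' (b : B) : lam (1 : B) b = b := by
  simp [lam, one_add']

private lemma lam_add' (a x y : B) : lam a (x + y) = lam a x + lam a y := by
  unfold lam
  rw [← add_assoc, circ_add]

private lemma lam_mul' (a b x : B) : lam (a * b) x = lam a (lam b x) := by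
  unfold lam
  rw [mul_inv_rev, mul_assoc]
  congr 1
  have h := circ_add b (b⁻¹ * a⁻¹) x
  rw [mul_inv_cancel_left] at h
  exact h

private lemma add_neg' (a : B) : a + neg a = 1 := by
  have h := circ_add a 1 a⁻¹
  rw [one_add', mul_one, mul_inv_cancel] at h
  exact h.symm

private lemma gp_add_ep' (b : B) : gp b + ep b = b := by
  unfold ep gp
  rw [← add_assoc, add_neg', one_add']

private lemma ep_mem' (b : B) : ep b ∈ E B := by
  show ep b + ep b = ep b
  have hbn : b + neg (b + 1) = 1 := by
    conv_lhs => rw [← one_add' (neg (b + 1)), ← add_assoc]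
    exact add_neg' (b + 1)
  unfold ep gp
  rw [add_assoc (neg (b + 1)) b (neg (b + 1) + b), ← add_assoc b, hbn, one_add']

private lemma E_add_one' (hE : IsIdeal (E B)) {e : B} (he : e ∈ E B) : e + 1 = 1 := by
  have hi : e⁻¹ ∈ E B := hE.2.1.1.2.2 e he
  have hi' : e⁻¹ + e⁻¹ = e⁻¹ := hi
  have hn : neg e = 1 := by
    unfold neg
    rw [hi', mul_inv_cancel]
  have h := add_neg' e
  rwa [hn] at h

private lemma E_add' (hE : IsIdeal (E B)) {e : B} (he : e ∈ E B) (x : B) : e + x = x := by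
  conv_lhs => rw [← one_add' x, ← add_assoc]
  rw [E_add_one' hE he, one_add']

private lemma mul_E_add_one' (hE : IsIdeal (E B)) {f : B} (hf : f ∈ E B) (x : B) :
    x * f + 1 = x + 1 := by
  have h1 : x * (x⁻¹ + lam x⁻¹ 1) = 1 := by
    show lam x (lam x⁻¹ 1) = 1
    rw [← lam_mul', mul_inv_cancel, lam_one']
  have h := circ_add x f (lam x⁻¹ 1)
  rw [E_add' hE hf, h1] at h
  rw [← h]
  unfold lam
  rw [inv_inv, mul_inv_cancel_left]

private lemma E_mul_add_one' (hE : IsIdeal (E B)) {e : B} (he : e ∈ E B) (x : B) :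
    e * x + 1 = x + 1 := by
  have hc : x⁻¹ * e * x ∈ E B := by
    have h := hE.2.1.2 e he x⁻¹
    rwa [inv_inv] at h
  have hx : e * x = x * (x⁻¹ * e * x) := by group
  rw [hx, mul_E_add_one' hE hc]

private lemma rho_E' (hE : IsIdeal (E B)) {e : B} (he : e ∈ E B) (x : B) :
    x + e = e * (x + 1) := by
  have h1 : e⁻¹ + 1 = 1 := E_add_one' hE (hE.2.1.1.2.2 e he)
  have h := circ_add e x 1
  rw [h1, mul_one] at h
  have l : x + e = (x + 1) + e := by rw [add_assoc, one_add']
  have r : e * x + e = (e * x + 1) + e := by rw [add_assoc, one_add']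
  rw [h, l, r, E_mul_add_one' hE he]

private lemma lam_E' (hE : IsIdeal (E B)) {e : B} (he : e ∈ E B) (x : B) :
    lam e x = e * x := by
  unfold lam
  rw [E_add' hE (hE.2.1.1.2.2 e he)]

private lemma lam_id_add (t : B) (h : ∀ b : B, lam t b = b) (x : B) :
    t⁻¹ + x = t⁻¹ * x := by
  have hx : t * (t⁻¹ + x) = x := h x
  conv_rhs => rw [← hx]
  rw [inv_mul_cancel_left]

private lemma lam_inv_id (s : B) (hs : lam s = lam (1 : B)) (b : B) : lam s⁻¹ b = b := by
  have h1 : lam s (lam s⁻¹ b) = b := by rw [← lam_mul', mul_inv_cancel, lam_one']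
  have h2 : lam s (lam s⁻¹ b) = lam s⁻¹ b := by rw [hs, lam_one']
  exact h2.symm.trans h1

private lemma rho_eq_iff' (a : B) (h : rho a = rho (1 : B)) (y : B) :
    y + a = a * (y + 1) := by
  have hy := congrFun h y⁻¹
  unfold rho at hy
  rw [inv_inv, mul_one] at hy
  have h2 : (y + a) * ((y + a)⁻¹ * a) * (y + 1) = (y + a) * (y + 1)⁻¹ * (y + 1) := by
    rw [hy]
  rw [mul_inv_cancel_left, inv_mul_cancel_right] at h2
  exact h2.symm

private lemma rho_eq_one' (a : B) (h : ∀ y : B, y + a = a * (y + 1)) :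
    rho a = rho (1 : B) := by
  funext x
  unfold rho
  rw [h x⁻¹]
  group

/-- if `E` is an ideal of `B`, then
`Zoc(B) = {a ∈ B : ρ_a = ρ_0 and λ_a = λ_{e_a}}`. -/
theorem Zoc_eq (B : Type*) [LeftSemiBrace B] (hE : IsIdeal (E B)) :
    Zoc B = {a : B | rho a = rho (1 : B) ∧ lam a = lam (ep a)} := by
  ext a
  simp only [Zoc, Soc, Set.mem_setOf_eq]
  constructor
  · rintro ⟨s, ⟨hsr, hsl⟩, e, he, rfl⟩
    have hsid : ∀ b : B, lam s b = b := fun b => by rw [hsl, lam_one']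
    have hsinv : ∀ b : B, lam s⁻¹ b = b := lam_inv_id s hsl
    have hadd : ∀ x : B, s + x = s * x := by
      intro x
      have h := lam_id_add s⁻¹ hsinv x
      rwa [inv_inv] at h
    have haddinv : ∀ x : B, s⁻¹ + x = s⁻¹ * x := lam_id_add s hsid
    have hys : ∀ y : B, y + s = s * (y + 1) := rho_eq_iff' s hsr
    have key : ∀ y : B, y + (s + e) = (s * e) * (y + 1) := by
      intro y
      have hse : s * ((y + 1) + e) = s * (y + 1) + e := by
        have h := circ_add s (y + 1) e
        have h2 : s * (s⁻¹ + e) = e := hsid e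
        rwa [h2] at h
      calc y + (s + e) = (y + s) + e := (add_assoc y s e).symm
        _ = s * (y + 1) + e := by rw [hys y]
        _ = s * ((y + 1) + e) := hse.symm
        _ = s * (y + e) := by rw [add_assoc, one_add']
        _ = s * (e * (y + 1)) := by rw [rho_E' hE he y]
        _ = (s * e) * (y + 1) := (mul_assoc s e (y + 1)).symm
    have hz : s + e = s * e := hadd e
    constructor
    · apply rho_eq_one'
      intro y
      rw [key y, ← hz]
    · have hgp : gp (s + e) = s := by
        unfold gp
        rw [add_assoc, E_add_one' hE he, hadd 1, mul_one]
      have hneg : neg s = s⁻¹ := hsid s⁻¹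
      have hep : ep (s + e) = e := by
        unfold ep
        rw [hgp, hneg, haddinv (s + e), hz, inv_mul_cancel_left]
      rw [hep]
      funext x
      rw [hz, lam_mul', hsid]
  · rintro ⟨h1, h2⟩
    set g := gp a with hgdef
    set e := ep a with hedef
    have he : e ∈ E B := ep_mem' a
    have hee : e + e = e := he
    have hge : g + e = a := gp_add_ep' a
    set f := lam g⁻¹ e with hfdef
    have ha : a = g * f := by
      rw [hfdef]
      unfold lam
      rw [inv_inv, mul_inv_cancel_left, hge]
    have hf : f ∈ E B := by
      show f + f = f
      rw [hfdef, ← lam_add', hee]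
    have hfi : f⁻¹ ∈ E B := hE.2.1.1.2.2 f hf
    have he'' : e * f⁻¹ ∈ E B := hE.2.1.1.2.1 e he f⁻¹ hfi
    have hlamg : ∀ x : B, lam g x = (e * f⁻¹) * x := by
      intro x
      have t1 : lam f (lam f⁻¹ x) = x := by
        rw [← lam_mul', mul_inv_cancel, lam_one']
      calc lam g x = lam g (lam f (lam f⁻¹ x)) := by rw [t1]
        _ = lam (g * f) (lam f⁻¹ x) := (lam_mul' g f _).symm
        _ = lam a (lam f⁻¹ x) := by rw [← ha]
        _ = lam e (lam f⁻¹ x) := by rw [h2]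
        _ = lam (e * f⁻¹) x := (lam_mul' e f⁻¹ x).symm
        _ = (e * f⁻¹) * x := lam_E' hE he'' x
    have hg1 : g + 1 = g := by
      rw [hgdef]
      unfold gp
      rw [add_assoc, one_add' 1]
    have hya : ∀ y : B, y + a = a * (y + 1) := rho_eq_iff' a h1
    have hrho' : ∀ y : B, y + g = g * y + 1 := by
      intro y
      have s1 : ((y + g) + e) + 1 = y + g := by
        rw [add_assoc (y + g) e 1, E_add_one' hE he, add_assoc y g 1, hg1]
      have l1 : y + a = (y + g) + e := by rw [← hge, ← add_assoc]
      have l2 : a * (y + 1) = a * y + e := by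
        have hc := circ_add a y 1
        have hl : a * (a⁻¹ + 1) = e := by
          show lam a 1 = e
          rw [h2, lam_E' hE he, mul_one]
        rwa [hl] at hc
      have l3 : (y + g) + e = a * y + e := by
        rw [← l1, ← l2]
        exact hya y
      have hconj : y⁻¹ * f * y ∈ E B := by
        have h := hE.2.1.2 f hf y⁻¹
        rwa [inv_inv] at h
      have l4 : a * y = (g * y) * (y⁻¹ * f * y) := by rw [ha]; group
      have l5 : a * y + 1 = g * y + 1 := by rw [l4, mul_E_add_one' hE hconj]
      calc y + g = ((y + g) + e) + 1 := s1.symm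
        _ = (a * y + e) + 1 := by rw [l3]
        _ = a * y + 1 := by rw [add_assoc, E_add_one' hE he]
        _ = g * y + 1 := l5
    have hgg : g⁻¹ + g = 1 := by
      have h := hrho' g⁻¹
      rwa [mul_inv_cancel, one_add' 1] at h
    have hef1 : e * f⁻¹ = 1 := by
      have t := hlamg g
      have t2 : lam g g = g := by
        show g * (g⁻¹ + g) = g
        rw [hgg, mul_one]
      rw [t2] at t
      have h3 : (e * f⁻¹) * g = 1 * g := by rw [← t, one_mul]
      exact mul_right_cancel h3
    have hlamgid : ∀ x : B, lam g x = x := by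
      intro x
      rw [hlamg x, hef1, one_mul]
    have hlg : lam g = lam (1 : B) := by
      funext x
      rw [lam_one']
      exact hlamgid x
    have hrg : rho g = rho (1 : B) := by
      apply rho_eq_one'
      intro y
      have hc := circ_add g y 1
      have hl : g * (g⁻¹ + 1) = 1 := hlamgid 1
      rw [hl] at hc
      rw [hc]
      exact hrho' y
    exact ⟨g, ⟨hrg, hlg⟩, e, he, hge.symm⟩

end LeftSemiBrace
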